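/- Consider the four-party circuit of Fig. 1 with quantum outputs: with notation as in the canonical circuit, for each 3-element subset S of {A,B,C,D} and each 2-element subset T ⊂ S fix a finite-dimensional complex Hilbert space H_{S,T}; for each 2-element subset T and X ∈ T fix K_{T,X}; let ψ_S be a unit vector in ⊗_{T⊂S} H_{S,T} for each source S, and U_T a linear isometric equivalence from ⊗_{S⊃T} H_{S,T} onto ⊗_{X∈T} K_{T,X} for each transformation T. For each party X, let V_X be a linear isometry from ⊗_{T∋X} K_{T,X} into ℂ² ⊗ E_X for some finite-dimensional complex Hilbert space E_X (the party's output qubit and local environment). Then there do not exist a unit vector χ ∈ E_A ⊗ E_B ⊗ E_C ⊗ E_D such that (V_A ⊗ V_B ⊗ V_C ⊗ V_D) U |ψ⟩ = |GHZ₄⟩ ⊗ |χ⟩ (up to the canonical reordering of tensor factors), where |ψ⟩ is the tensor product of the four source states, U is the tensor product of the six unitaries, and |GHZ₄⟩ = (|0000⟩ + |1111⟩)/√2 ∈ (ℂ²)^{⊗4}. -/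

import Mathlib

open scoped Matrix

/-!
Let `W = V U` be the isometry from the sources to the outputs and let `P_X` project onto the
event that party `X` outputs `0`. The outputs of GHZ₄ are perfectly correlated, so the four
vectors `W† P_X W ψ` are one and the same vector `u`. The operator `W† P_X W` acts as the identity
on the one source that is not connected to `X`, so `u` keeps each of the four source states as a
tensor factor, which forces `u = μ ψ`. On the one hand `μ = ⟨ψ, u⟩ = ‖P_A W ψ‖² = 1/2`. On the
other hand `W† P_A W` and `W† P_D W` multiply to `W† P_A P_D W`, because the channels of `A` and
`D` act on disjoint systems and `U` is unitary; applied to `ψ` this gives `μ² = μ`.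
-/

section

variable {iABC_AB iABC_AC iABC_BC iABD_AB iABD_AD iABD_BD
    iACD_AC iACD_AD iACD_CD iBCD_BC iBCD_BD iBCD_CD : Type}
variable [Fintype iABC_AB] [Fintype iABC_AC] [Fintype iABC_BC]
  [Fintype iABD_AB] [Fintype iABD_AD] [Fintype iABD_BD]
  [Fintype iACD_AC] [Fintype iACD_AD] [Fintype iACD_CD]
  [Fintype iBCD_BC] [Fintype iBCD_BD] [Fintype iBCD_CD]
variable [DecidableEq iABC_AB] [DecidableEq iABC_AC] [DecidableEq iABC_BC]
  [DecidableEq iABD_AB] [DecidableEq iABD_AD] [DecidableEq iABD_BD]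
  [DecidableEq iACD_AC] [DecidableEq iACD_AD] [DecidableEq iACD_CD]
  [DecidableEq iBCD_BC] [DecidableEq iBCD_BD] [DecidableEq iBCD_CD]
variable {kAB_A kAB_B kAC_A kAC_C kAD_A kAD_D kBC_B kBC_C kBD_B kBD_D kCD_C kCD_D : Type}
variable [Fintype kAB_A] [Fintype kAB_B] [Fintype kAC_A] [Fintype kAC_C]
  [Fintype kAD_A] [Fintype kAD_D] [Fintype kBC_B] [Fintype kBC_C]
  [Fintype kBD_B] [Fintype kBD_D] [Fintype kCD_C] [Fintype kCD_D]
variable [DecidableEq kAB_A] [DecidableEq kAB_B] [DecidableEq kAC_A] [DecidableEq kAC_C]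
  [DecidableEq kAD_A] [DecidableEq kAD_D] [DecidableEq kBC_B] [DecidableEq kBC_C]
  [DecidableEq kBD_B] [DecidableEq kBD_D] [DecidableEq kCD_C] [DecidableEq kCD_D]
variable {εA εB εC εD : Type}
variable [Fintype εA] [Fintype εB] [Fintype εC] [Fintype εD]

/-- The global output vector `(V_A ⊗ V_B ⊗ V_C ⊗ V_D) U |ψ⟩` of the canonical circuit,
as an element of `(ℂ² ⊗ E_A) ⊗ (ℂ² ⊗ E_B) ⊗ (ℂ² ⊗ E_C) ⊗ (ℂ² ⊗ E_D)`, where `|ψ⟩` is the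
tensor product of the four source states and `U` the tensor product of the six
transformation unitaries. -/
noncomputable def circuitOutput
    (ψABC : iABC_AB × iABC_AC × iABC_BC → ℂ)
    (ψABD : iABD_AB × iABD_AD × iABD_BD → ℂ)
    (ψACD : iACD_AC × iACD_AD × iACD_CD → ℂ)
    (ψBCD : iBCD_BC × iBCD_BD × iBCD_CD → ℂ)
    (UAB : Matrix (kAB_A × kAB_B) (iABC_AB × iABD_AB) ℂ)
    (UAC : Matrix (kAC_A × kAC_C) (iABC_AC × iACD_AC) ℂ)
    (UAD : Matrix (kAD_A × kAD_D) (iABD_AD × iACD_AD) ℂ)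
    (UBC : Matrix (kBC_B × kBC_C) (iABC_BC × iBCD_BC) ℂ)
    (UBD : Matrix (kBD_B × kBD_D) (iABD_BD × iBCD_BD) ℂ)
    (UCD : Matrix (kCD_C × kCD_D) (iACD_CD × iBCD_CD) ℂ)
    (VA : Matrix (Fin 2 × εA) (kAB_A × kAC_A × kAD_A) ℂ)
    (VB : Matrix (Fin 2 × εB) (kAB_B × kBC_B × kBD_B) ℂ)
    (VC : Matrix (Fin 2 × εC) (kAC_C × kBC_C × kCD_C) ℂ)
    (VD : Matrix (Fin 2 × εD) (kAD_D × kBD_D × kCD_D) ℂ) :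
    (Fin 2 × εA) × (Fin 2 × εB) × (Fin 2 × εC) × (Fin 2 × εD) → ℂ :=
  -- the global source state |ψ⟩ = ψ_ABC ⊗ ψ_ABD ⊗ ψ_ACD ⊗ ψ_BCD
  let Ψ : (iABC_AB × iABC_AC × iABC_BC) × (iABD_AB × iABD_AD × iABD_BD) ×
      (iACD_AC × iACD_AD × iACD_CD) × (iBCD_BC × iBCD_BD × iBCD_CD) → ℂ :=
    fun x => ψABC x.1 * ψABD x.2.1 * ψACD x.2.2.1 * ψBCD x.2.2.2
  -- the global unitary U = U_AB ⊗ U_AC ⊗ U_AD ⊗ U_BC ⊗ U_BD ⊗ U_CD (with reordering)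
  let U : Matrix
      ((kAB_A × kAB_B) × (kAC_A × kAC_C) × (kAD_A × kAD_D) ×
        (kBC_B × kBC_C) × (kBD_B × kBD_D) × (kCD_C × kCD_D))
      ((iABC_AB × iABC_AC × iABC_BC) × (iABD_AB × iABD_AD × iABD_BD) ×
        (iACD_AC × iACD_AD × iACD_CD) × (iBCD_BC × iBCD_BD × iBCD_CD)) ℂ :=
    fun k x =>
      UAB k.1 (x.1.1, x.2.1.1) *
      UAC k.2.1 (x.1.2.1, x.2.2.1.1) *
      UAD k.2.2.1 (x.2.1.2.1, x.2.2.1.2.1) *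
      UBC k.2.2.2.1 (x.1.2.2, x.2.2.2.1) *
      UBD k.2.2.2.2.1 (x.2.1.2.2, x.2.2.2.2.1) *
      UCD k.2.2.2.2.2 (x.2.2.1.2.2, x.2.2.2.2.2)
  -- the global isometry V_A ⊗ V_B ⊗ V_C ⊗ V_D (with reordering)
  let V : Matrix ((Fin 2 × εA) × (Fin 2 × εB) × (Fin 2 × εC) × (Fin 2 × εD))
      ((kAB_A × kAB_B) × (kAC_A × kAC_C) × (kAD_A × kAD_D) ×
        (kBC_B × kBC_C) × (kBD_B × kBD_D) × (kCD_C × kCD_D)) ℂ :=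
    fun w k =>
      VA w.1 (k.1.1, k.2.1.1, k.2.2.1.1) *
      VB w.2.1 (k.1.2, k.2.2.2.1.1, k.2.2.2.2.1.1) *
      VC w.2.2.1 (k.2.1.2, k.2.2.2.1.2, k.2.2.2.2.2.1) *
      VD w.2.2.2 (k.2.2.1.2, k.2.2.2.2.1.2, k.2.2.2.2.2.2)
  V *ᵥ (U *ᵥ Ψ)

/-- The four-partite GHZ state `(|0000⟩ + |1111⟩)/√2 ∈ (ℂ²)^{⊗4}`. -/
noncomputable def ghz4 (q1 q2 q3 q4 : Fin 2) : ℂ :=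
  if (q1 = 0 ∧ q2 = 0 ∧ q3 = 0 ∧ q4 = 0) ∨ (q1 = 1 ∧ q2 = 1 ∧ q3 = 1 ∧ q4 = 1) then
    ((1 : ℝ) / Real.sqrt 2 : ℝ) else 0

end

open Matrix Kronecker

namespace CommonCause

section Locality

variable {ω κ ι m n p q α β γ α' β' : Type*}

theorem conjTranspose_kronecker_submatrix_mul [Fintype ω] [Fintype m] [Fintype p] [Fintype n]
    [Fintype q] (A : Matrix m n ℂ) (B : Matrix p q ℂ) (D : Matrix m m ℂ) (E : Matrix p p ℂ)
    (ρ : ω ≃ m × p) (τ : κ → n × q) :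
    ((A ⊗ₖ B).submatrix ρ τ)ᴴ * (D ⊗ₖ E).submatrix ρ ρ * (A ⊗ₖ B).submatrix ρ τ =
      ((Aᴴ * D * A) ⊗ₖ (Bᴴ * E * B)).submatrix τ τ := by
  rw [conjTranspose_submatrix, submatrix_mul_equiv, submatrix_mul_equiv, conjTranspose_kronecker,
    ← mul_kronecker_mul, ← mul_kronecker_mul]

theorem kronecker_conjTranspose_mul_self [Fintype m] [Fintype p] [DecidableEq n] [DecidableEq q]
    {A : Matrix m n ℂ} {B : Matrix p q ℂ} (hA : Aᴴ * A = 1) (hB : Bᴴ * B = 1) :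
    (A ⊗ₖ B)ᴴ * (A ⊗ₖ B) = 1 := by
  rw [conjTranspose_kronecker, ← mul_kronecker_mul, hA, hB, one_kronecker_one]

theorem kronecker_mul_conjTranspose_self [Fintype n] [Fintype q] [DecidableEq m] [DecidableEq p]
    {A : Matrix m n ℂ} {B : Matrix p q ℂ} (hA : A * Aᴴ = 1) (hB : B * Bᴴ = 1) :
    (A ⊗ₖ B) * (A ⊗ₖ B)ᴴ = 1 := by
  rw [conjTranspose_kronecker, ← mul_kronecker_mul, hA, hB, one_kronecker_one]

theorem conjTranspose_submatrix_id_mul_self [Fintype m] (A : Matrix m n ℂ) (e : κ → n) :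
    (A.submatrix id e)ᴴ * A.submatrix id e = (Aᴴ * A).submatrix e e := by
  rw [conjTranspose_submatrix, ← submatrix_mul _ _ _ _ _ Function.bijective_id]

theorem submatrix_id_mul_conjTranspose_self [Fintype n] [Fintype κ] (A : Matrix m n ℂ)
    (e : κ ≃ n) : A.submatrix id e * (A.submatrix id e)ᴴ = A * Aᴴ := by
  rw [conjTranspose_submatrix, submatrix_mul_equiv, submatrix_id_id]

theorem star_mulVec_dotProduct_mulVec [Fintype ω] [Fintype ι] [DecidableEq ι] {W : Matrix ω ι ℂ}
    (hW : Wᴴ * W = 1) (v : ι → ℂ) : star (W *ᵥ v) ⬝ᵥ (W *ᵥ v) = star v ⬝ᵥ v := by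
  rw [star_mulVec, ← dotProduct_mulVec, mulVec_mulVec, hW, one_mulVec]

theorem conjTranspose_mul_mul_conj [Fintype κ] [Fintype ω] (V : Matrix ω κ ℂ) (U : Matrix κ ι ℂ)
    (M : Matrix ω ω ℂ) : (V * U)ᴴ * M * (V * U) = Uᴴ * (Vᴴ * M * V) * U := by
  simp only [conjTranspose_mul, Matrix.mul_assoc]

theorem conj_mul_conj [Fintype κ] [Fintype ι] [DecidableEq κ] {U : Matrix κ ι ℂ}
    (hU : U * Uᴴ = 1) (X Y : Matrix κ κ ℂ) : Uᴴ * X * U * (Uᴴ * Y * U) = Uᴴ * (X * Y) * U := by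
  simp only [Matrix.mul_assoc]
  rw [← Matrix.mul_assoc U, hU, Matrix.one_mul]

theorem conj_kronecker_one_mul_conj_one_kronecker [Fintype κ] [Fintype m] [Fintype p] [Fintype n]
    [Fintype q] [DecidableEq m] [DecidableEq p] [DecidableEq n] [DecidableEq q] {A : Matrix m n ℂ}
    {B : Matrix p q ℂ} (hA : Aᴴ * A = 1) (hB : Bᴴ * B = 1) (τ : κ ≃ n × q) (D : Matrix m m ℂ)
    (E : Matrix p p ℂ) :
    ((A ⊗ₖ B).submatrix id τ)ᴴ * (D ⊗ₖ (1 : Matrix p p ℂ)) * (A ⊗ₖ B).submatrix id τ *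
        (((A ⊗ₖ B).submatrix id τ)ᴴ * ((1 : Matrix m m ℂ) ⊗ₖ E) * (A ⊗ₖ B).submatrix id τ) =
      ((A ⊗ₖ B).submatrix id τ)ᴴ * (D ⊗ₖ E) * (A ⊗ₖ B).submatrix id τ := by
  have h := fun D E => conjTranspose_kronecker_submatrix_mul A B D E (Equiv.refl (m × p)) τ
  simp only [Equiv.coe_refl, submatrix_id_id] at h
  rw [h, h, h, submatrix_mul_equiv, ← mul_kronecker_mul]
  simp [hA, hB]

theorem mul_self_eq_of_pullback_mul [Fintype ω] [Fintype ι] {W : Matrix ω ι ℂ} {Ψ : ι → ℂ}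
    {P Q R : Matrix ω ω ℂ} {μ : ℂ} (hΨ : star Ψ ⬝ᵥ Ψ = 1)
    (hPQ : Wᴴ * P * W * (Wᴴ * Q * W) = Wᴴ * R * W)
    (hQ : Q *ᵥ (W *ᵥ Ψ) = P *ᵥ (W *ᵥ Ψ)) (hR : R *ᵥ (W *ᵥ Ψ) = P *ᵥ (W *ᵥ Ψ))
    (hP : Wᴴ *ᵥ (P *ᵥ (W *ᵥ Ψ)) = μ • Ψ) : μ * μ = μ := by
  have hpull : ∀ S, (Wᴴ * S * W) *ᵥ Ψ = Wᴴ *ᵥ (S *ᵥ (W *ᵥ Ψ)) := fun S => by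
    rw [← mulVec_mulVec, ← mulVec_mulVec]
  have h : (μ * μ) • Ψ = μ • Ψ := by
    rw [← hP, ← hR, ← hpull, ← hPQ, ← mulVec_mulVec, hpull, hQ, hP, mulVec_smul, hpull, hP,
      smul_smul]
  simpa [dotProduct_smul, hΨ] using congrArg (star Ψ ⬝ᵥ ·) h

def IsLocal [DecidableEq β] (σ : κ → α × β) (M : Matrix κ κ ℂ) : Prop :=
  ∃ L : Matrix α α ℂ, M = (L ⊗ₖ (1 : Matrix β β ℂ)).submatrix σ σ

theorem IsLocal.conj [Fintype κ] [Fintype α] [Fintype β] [Fintype n] [Fintype q]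
    [DecidableEq β] [DecidableEq q] {σ : κ ≃ α × β} {M : Matrix κ κ ℂ} (hM : IsLocal σ M)
    {U : Matrix κ ι ℂ} {U₁ : Matrix α n ℂ} {U₂ : Matrix β q ℂ} {c : ι → n × q}
    (hU : U = (U₁ ⊗ₖ U₂).submatrix σ c) (hU₂ : U₂ᴴ * U₂ = 1) :
    IsLocal c (Uᴴ * M * U) := by
  obtain ⟨L, rfl⟩ := hM
  refine ⟨U₁ᴴ * L * U₁, ?_⟩
  rw [hU, conjTranspose_kronecker_submatrix_mul, Matrix.mul_one, hU₂]

theorem IsLocal.coarsen [DecidableEq β] [DecidableEq β'] [DecidableEq γ]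
    {σ : κ → α × β} {σ' : κ → α' × β'} {M : Matrix κ κ ℂ} (hM : IsLocal σ M)
    (g : α' → α) (r : α' → γ) (hg : ∀ k, (σ k).1 = g (σ' k).1)
    (hr : ∀ k k', (σ k).2 = (σ k').2 ↔ (σ' k).2 = (σ' k').2 ∧ r (σ' k).1 = r (σ' k').1) :
    IsLocal σ' M := by
  obtain ⟨L, rfl⟩ := hM
  refine ⟨of fun a a' => L (g a) (g a') * if r a = r a' then 1 else 0, ?_⟩
  ext k k'
  simp only [submatrix_apply, kroneckerMap_apply, of_apply, one_apply, hg, mul_ite, mul_one,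
    mul_zero, ← ite_and]
  exact if_congr (hr k k') rfl rfl

def HasTensorFactor (θ : ι → α × β) (ψ : β → ℂ) (u : ι → ℂ) : Prop :=
  ∃ a : α → ℂ, ∀ x, u x = a (θ x).1 * ψ (θ x).2

theorem IsLocal.hasTensorFactor_mulVec [Fintype ι] [Fintype α] [Fintype β] [DecidableEq β]
    {θ : ι ≃ α × β} {M : Matrix ι ι ℂ} (hM : IsLocal θ M) {ψ : β → ℂ} {u : ι → ℂ}
    (hu : HasTensorFactor θ ψ u) : HasTensorFactor θ ψ (M *ᵥ u) := by
  obtain ⟨L, rfl⟩ := hM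
  obtain ⟨a, ha⟩ := hu
  refine ⟨L *ᵥ a, fun x => ?_⟩
  rw [submatrix_mulVec_equiv]
  simp only [Function.comp_apply, mulVec, dotProduct, Fintype.sum_prod_type, kroneckerMap_apply,
    one_apply, ha, Equiv.apply_symm_apply]
  simp [Finset.sum_mul, mul_assoc]

theorem HasTensorFactor.mul_comm_of_fst_eq {θ : ι → α × β} {ψ : β → ℂ} {u : ι → ℂ}
    (hu : HasTensorFactor θ ψ u) (x x' : ι) (h : (θ x).1 = (θ x').1) :
    u x * ψ (θ x').2 = u x' * ψ (θ x).2 := by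
  obtain ⟨a, ha⟩ := hu
  rw [ha x, ha x', h]
  ring

end Locality

section FourFactors

variable {α₁ α₂ α₃ α₄ : Type*}

def pick₁ : α₁ × α₂ × α₃ × α₄ ≃ α₁ × α₂ × α₃ × α₄ := Equiv.refl _

def pick₂ : α₁ × α₂ × α₃ × α₄ ≃ α₂ × α₁ × α₃ × α₄ where
  toFun x := (x.2.1, x.1, x.2.2)
  invFun y := (y.2.1, y.1, y.2.2)
  left_inv _ := rfl
  right_inv _ := rfl

def pick₃ : α₁ × α₂ × α₃ × α₄ ≃ α₃ × α₁ × α₂ × α₄ where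
  toFun x := (x.2.2.1, x.1, x.2.1, x.2.2.2)
  invFun y := (y.2.1, y.2.2.1, y.1, y.2.2.2)
  left_inv _ := rfl
  right_inv _ := rfl

def pick₄ : α₁ × α₂ × α₃ × α₄ ≃ α₄ × α₁ × α₂ × α₃ where
  toFun x := (x.2.2.2, x.1, x.2.1, x.2.2.1)
  invFun y := (y.2.1, y.2.2.1, y.2.2.2, y.1)
  left_inv _ := rfl
  right_inv _ := rfl

section Kronecker

variable {m₁ m₂ m₃ m₄ n₁ n₂ n₃ n₄ : Type*}
  (A₁ : Matrix m₁ n₁ ℂ) (A₂ : Matrix m₂ n₂ ℂ) (A₃ : Matrix m₃ n₃ ℂ) (A₄ : Matrix m₄ n₄ ℂ)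

theorem kronecker_eq_pick₂ :
    A₁ ⊗ₖ (A₂ ⊗ₖ (A₃ ⊗ₖ A₄)) = (A₂ ⊗ₖ (A₁ ⊗ₖ (A₃ ⊗ₖ A₄))).submatrix pick₂ pick₂ := by
  ext
  simp only [kroneckerMap_apply, pick₂, Equiv.coe_fn_mk, submatrix_apply]
  ring

theorem kronecker_eq_pick₃ :
    A₁ ⊗ₖ (A₂ ⊗ₖ (A₃ ⊗ₖ A₄)) = (A₃ ⊗ₖ (A₁ ⊗ₖ (A₂ ⊗ₖ A₄))).submatrix pick₃ pick₃ := by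
  ext
  simp only [kroneckerMap_apply, pick₃, Equiv.coe_fn_mk, submatrix_apply]
  ring

theorem kronecker_eq_pick₄ :
    A₁ ⊗ₖ (A₂ ⊗ₖ (A₃ ⊗ₖ A₄)) = (A₄ ⊗ₖ (A₁ ⊗ₖ (A₂ ⊗ₖ A₃))).submatrix pick₄ pick₄ := by
  ext
  simp only [kroneckerMap_apply, pick₄, Equiv.coe_fn_mk, submatrix_apply]
  ring

end Kronecker

def productState (ψ₁ : α₁ → ℂ) (ψ₂ : α₂ → ℂ) (ψ₃ : α₃ → ℂ) (ψ₄ : α₄ → ℂ) :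
    α₁ × α₂ × α₃ × α₄ → ℂ :=
  fun x => ψ₁ x.1 * ψ₂ x.2.1 * ψ₃ x.2.2.1 * ψ₄ x.2.2.2

variable {ψ₁ : α₁ → ℂ} {ψ₂ : α₂ → ℂ} {ψ₃ : α₃ → ℂ} {ψ₄ : α₄ → ℂ}

theorem productState_hasTensorFactor₁ :
    HasTensorFactor (pick₁.trans (Equiv.prodComm _ _)) ψ₁ (productState ψ₁ ψ₂ ψ₃ ψ₄) :=
  ⟨fun y => ψ₂ y.1 * ψ₃ y.2.1 * ψ₄ y.2.2, fun _ => by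
    simp only [productState, pick₁, Equiv.trans_apply, Equiv.refl_apply, Equiv.prodComm_apply,
      Prod.fst_swap, Prod.snd_swap]
    ring⟩

theorem productState_hasTensorFactor₂ :
    HasTensorFactor (pick₂.trans (Equiv.prodComm _ _)) ψ₂ (productState ψ₁ ψ₂ ψ₃ ψ₄) :=
  ⟨fun y => ψ₁ y.1 * ψ₃ y.2.1 * ψ₄ y.2.2, fun _ => by
    simp only [productState, pick₂, Equiv.trans_apply, Equiv.coe_fn_mk, Equiv.prodComm_apply,
      Prod.swap_prod_mk]
    ring⟩

theorem productState_hasTensorFactor₃ :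
    HasTensorFactor (pick₃.trans (Equiv.prodComm _ _)) ψ₃ (productState ψ₁ ψ₂ ψ₃ ψ₄) :=
  ⟨fun y => ψ₁ y.1 * ψ₂ y.2.1 * ψ₄ y.2.2, fun _ => by
    simp only [productState, pick₃, Equiv.trans_apply, Equiv.coe_fn_mk, Equiv.prodComm_apply,
      Prod.swap_prod_mk]
    ring⟩

theorem productState_hasTensorFactor₄ :
    HasTensorFactor (pick₄.trans (Equiv.prodComm _ _)) ψ₄ (productState ψ₁ ψ₂ ψ₃ ψ₄) :=
  ⟨fun y => ψ₁ y.1 * ψ₂ y.2.1 * ψ₃ y.2.2, fun _ => rfl⟩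

theorem eq_smul_productState {u : α₁ × α₂ × α₃ × α₄ → ℂ}
    (h₁ : HasTensorFactor (pick₁.trans (Equiv.prodComm _ _)) ψ₁ u)
    (h₂ : HasTensorFactor (pick₂.trans (Equiv.prodComm _ _)) ψ₂ u)
    (h₃ : HasTensorFactor (pick₃.trans (Equiv.prodComm _ _)) ψ₃ u)
    (h₄ : HasTensorFactor (pick₄.trans (Equiv.prodComm _ _)) ψ₄ u)
    {p : α₁ × α₂ × α₃ × α₄} (hp : productState ψ₁ ψ₂ ψ₃ ψ₄ p ≠ 0) :
    u = (u p / productState ψ₁ ψ₂ ψ₃ ψ₄ p) • productState ψ₁ ψ₂ ψ₃ ψ₄ := by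
  obtain ⟨p₁, p₂, p₃, p₄⟩ := p
  funext ⟨x₁, x₂, x₃, x₄⟩
  -- move from `x` to `p` one coordinate at a time
  have e₄ : u (x₁, x₂, x₃, x₄) * ψ₄ p₄ = u (x₁, x₂, x₃, p₄) * ψ₄ x₄ :=
    h₄.mul_comm_of_fst_eq (x₁, x₂, x₃, x₄) (x₁, x₂, x₃, p₄) rfl
  have e₃ : u (x₁, x₂, x₃, p₄) * ψ₃ p₃ = u (x₁, x₂, p₃, p₄) * ψ₃ x₃ :=
    h₃.mul_comm_of_fst_eq (x₁, x₂, x₃, p₄) (x₁, x₂, p₃, p₄) rfl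
  have e₂ : u (x₁, x₂, p₃, p₄) * ψ₂ p₂ = u (x₁, p₂, p₃, p₄) * ψ₂ x₂ :=
    h₂.mul_comm_of_fst_eq (x₁, x₂, p₃, p₄) (x₁, p₂, p₃, p₄) rfl
  have e₁ : u (x₁, p₂, p₃, p₄) * ψ₁ p₁ = u (p₁, p₂, p₃, p₄) * ψ₁ x₁ :=
    h₁.mul_comm_of_fst_eq (x₁, p₂, p₃, p₄) (p₁, p₂, p₃, p₄) rfl
  simp only [productState, Pi.smul_apply, smul_eq_mul] at hp ⊢
  rw [div_mul_eq_mul_div, eq_div_iff hp]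
  linear_combination (ψ₁ p₁ * ψ₂ p₂ * ψ₃ p₃) * e₄ + (ψ₁ p₁ * ψ₂ p₂ * ψ₄ x₄) * e₃ +
    (ψ₁ p₁ * ψ₃ x₃ * ψ₄ x₄) * e₂ + (ψ₂ x₂ * ψ₃ x₃ * ψ₄ x₄) * e₁

end FourFactors

section SixFactors

/-! The six factors stand for the pairs `AB, AC, AD, BC, BD, CD`; `splitAtX` puts the three
pairs containing `X` first. -/

variable {β₁ β₂ β₃ β₄ β₅ β₆ : Type*}

def splitAtA : β₁ × β₂ × β₃ × β₄ × β₅ × β₆ ≃ (β₁ × β₂ × β₃) × β₄ × β₅ × β₆ where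
  toFun t := ((t.1, t.2.1, t.2.2.1), t.2.2.2)
  invFun s := (s.1.1, s.1.2.1, s.1.2.2, s.2)
  left_inv _ := rfl
  right_inv _ := rfl

def splitAtB : β₁ × β₂ × β₃ × β₄ × β₅ × β₆ ≃ (β₁ × β₄ × β₅) × β₂ × β₃ × β₆ where
  toFun t := ((t.1, t.2.2.2.1, t.2.2.2.2.1), (t.2.1, t.2.2.1, t.2.2.2.2.2))
  invFun s := (s.1.1, s.2.1, s.2.2.1, s.1.2.1, s.1.2.2, s.2.2.2)
  left_inv _ := rfl
  right_inv _ := rfl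

def splitAtC : β₁ × β₂ × β₃ × β₄ × β₅ × β₆ ≃ (β₂ × β₄ × β₆) × β₁ × β₃ × β₅ where
  toFun t := ((t.2.1, t.2.2.2.1, t.2.2.2.2.2), (t.1, t.2.2.1, t.2.2.2.2.1))
  invFun s := (s.2.1, s.1.1, s.2.2.1, s.1.2.1, s.2.2.2, s.1.2.2)
  left_inv _ := rfl
  right_inv _ := rfl

def splitAtD : β₁ × β₂ × β₃ × β₄ × β₅ × β₆ ≃ (β₃ × β₅ × β₆) × β₁ × β₂ × β₄ where
  toFun t := ((t.2.2.1, t.2.2.2.2.1, t.2.2.2.2.2), (t.1, t.2.1, t.2.2.2.1))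
  invFun s := (s.2.1, s.2.2.1, s.1.1, s.2.2.2, s.1.2.1, s.1.2.2)
  left_inv _ := rfl
  right_inv _ := rfl

variable {m₁ m₂ m₃ m₄ m₅ m₆ n₁ n₂ n₃ n₄ n₅ n₆ : Type*}
  (A₁ : Matrix m₁ n₁ ℂ) (A₂ : Matrix m₂ n₂ ℂ) (A₃ : Matrix m₃ n₃ ℂ)
  (A₄ : Matrix m₄ n₄ ℂ) (A₅ : Matrix m₅ n₅ ℂ) (A₆ : Matrix m₆ n₆ ℂ)

theorem kronecker_eq_splitAtA : A₁ ⊗ₖ (A₂ ⊗ₖ (A₃ ⊗ₖ (A₄ ⊗ₖ (A₅ ⊗ₖ A₆)))) =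
    ((A₁ ⊗ₖ (A₂ ⊗ₖ A₃)) ⊗ₖ (A₄ ⊗ₖ (A₅ ⊗ₖ A₆))).submatrix splitAtA splitAtA := by
  ext
  simp only [kroneckerMap_apply, splitAtA, Equiv.coe_fn_mk, submatrix_apply]
  ring

theorem kronecker_eq_splitAtB : A₁ ⊗ₖ (A₂ ⊗ₖ (A₃ ⊗ₖ (A₄ ⊗ₖ (A₅ ⊗ₖ A₆)))) =
    ((A₁ ⊗ₖ (A₄ ⊗ₖ A₅)) ⊗ₖ (A₂ ⊗ₖ (A₃ ⊗ₖ A₆))).submatrix splitAtB splitAtB := by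
  ext
  simp only [kroneckerMap_apply, splitAtB, Equiv.coe_fn_mk, submatrix_apply]
  ring

theorem kronecker_eq_splitAtC : A₁ ⊗ₖ (A₂ ⊗ₖ (A₃ ⊗ₖ (A₄ ⊗ₖ (A₅ ⊗ₖ A₆)))) =
    ((A₂ ⊗ₖ (A₄ ⊗ₖ A₆)) ⊗ₖ (A₁ ⊗ₖ (A₃ ⊗ₖ A₅))).submatrix splitAtC splitAtC := by
  ext
  simp only [kroneckerMap_apply, splitAtC, Equiv.coe_fn_mk, submatrix_apply]
  ring

theorem kronecker_eq_splitAtD : A₁ ⊗ₖ (A₂ ⊗ₖ (A₃ ⊗ₖ (A₄ ⊗ₖ (A₅ ⊗ₖ A₆)))) =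
    ((A₃ ⊗ₖ (A₅ ⊗ₖ A₆)) ⊗ₖ (A₁ ⊗ₖ (A₂ ⊗ₖ A₄))).submatrix splitAtD splitAtD := by
  ext
  simp only [kroneckerMap_apply, splitAtD, Equiv.coe_fn_mk, submatrix_apply]
  ring

end SixFactors

section GHZ

variable {εA εB εC εD : Type*}

local notation "Ω" => (Fin 2 × εA) × (Fin 2 × εB) × (Fin 2 × εC) × (Fin 2 × εD)

theorem eq_of_ghz4_ne_zero {q₁ q₂ q₃ q₄ : Fin 2} (h : ghz4 q₁ q₂ q₃ q₄ ≠ 0) :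
    q₂ = q₁ ∧ q₃ = q₁ ∧ q₄ = q₁ := by
  unfold ghz4 at h
  split_ifs at h with hq
  · rcases hq with ⟨rfl, rfl, rfl, rfl⟩ | ⟨rfl, rfl, rfl, rfl⟩ <;> simp
  · exact absurd rfl h

noncomputable def ghzOutput (χ : εA × εB × εC × εD → ℂ) : Ω → ℂ :=
  fun w => ghz4 w.1.1 w.2.1.1 w.2.2.1.1 w.2.2.2.1 * χ (w.1.2, w.2.1.2, w.2.2.1.2, w.2.2.2.2)

theorem qubits_eq_of_ghzOutput_ne_zero {χ : εA × εB × εC × εD → ℂ} {w : Ω}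
    (h : ghzOutput χ w ≠ 0) : w.2.1.1 = w.1.1 ∧ w.2.2.1.1 = w.1.1 ∧ w.2.2.2.1 = w.1.1 :=
  eq_of_ghz4_ne_zero (left_ne_zero_of_mul h)

def zeroProj (ε : Type*) [DecidableEq ε] : Matrix (Fin 2 × ε) (Fin 2 × ε) ℂ :=
  diagonal fun p => if p.1 = 0 then 1 else 0

variable [DecidableEq εA] [DecidableEq εB] [DecidableEq εC] [DecidableEq εD]

def zeroProjA : Matrix Ω Ω ℂ := zeroProj εA ⊗ₖ 1

def zeroProjB : Matrix Ω Ω ℂ := 1 ⊗ₖ (zeroProj εB ⊗ₖ (1 ⊗ₖ 1))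

def zeroProjC : Matrix Ω Ω ℂ := 1 ⊗ₖ (1 ⊗ₖ (zeroProj εC ⊗ₖ 1))

def zeroProjD : Matrix Ω Ω ℂ := 1 ⊗ₖ (1 ⊗ₖ (1 ⊗ₖ zeroProj εD))

variable [Fintype εA] [Fintype εB] [Fintype εC] [Fintype εD] (χ : εA × εB × εC × εD → ℂ)

theorem ghzOutput_correlated :
    zeroProjB *ᵥ ghzOutput χ = zeroProjA *ᵥ ghzOutput χ ∧
      zeroProjC *ᵥ ghzOutput χ = zeroProjA *ᵥ ghzOutput χ ∧
      zeroProjD *ᵥ ghzOutput χ = zeroProjA *ᵥ ghzOutput χ ∧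
      (zeroProj εA ⊗ₖ (1 ⊗ₖ (1 ⊗ₖ zeroProj εD))) *ᵥ ghzOutput χ = zeroProjA *ᵥ ghzOutput χ := by
  refine ⟨?_, ?_, ?_, ?_⟩
  all_goals
    funext w
    simp only [zeroProjA, zeroProjB, zeroProjC, zeroProjD, zeroProj, ← diagonal_one,
      diagonal_kronecker_diagonal, mulVec_diagonal]
    rcases eq_or_ne (ghzOutput χ w) 0 with h | h
    · simp [h]
    · obtain ⟨h₂, h₃, h₄⟩ := qubits_eq_of_ghzOutput_ne_zero h
      by_cases h₁ : w.1.1 = 0 <;> simp [h₁, h₂, h₃, h₄]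

theorem ghzOutput_dotProduct (hχ : ∑ e, ‖χ e‖ ^ 2 = 1) :
    star (ghzOutput χ) ⬝ᵥ ghzOutput χ = 1 ∧
      star (ghzOutput χ) ⬝ᵥ (zeroProjA *ᵥ ghzOutput χ) = 2⁻¹ := by
  have hχ' : ∑ e, starRingEnd ℂ (χ e) * χ e = 1 := by
    simp_rw [Complex.conj_mul', ← Complex.ofReal_pow, ← Complex.ofReal_sum, hχ,
      Complex.ofReal_one]
  have hhalf : ∀ z : ℂ, ((√2 : ℝ) : ℂ)⁻¹ * starRingEnd ℂ z * (((√2 : ℝ) : ℂ)⁻¹ * z) =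
      2⁻¹ * (starRingEnd ℂ z * z) := by
    intro z
    have h2 : ((√2 : ℝ) : ℂ) ^ 2 = 2 := by
      rw [← Complex.ofReal_pow, Real.sq_sqrt zero_le_two, Complex.ofReal_ofNat]
    rw [mul_mul_mul_comm, ← mul_inv, ← sq, h2]
  simp only [Fintype.sum_prod_type] at hχ'
  constructor
  all_goals
    simp [dotProduct, ghzOutput, zeroProjA, zeroProj, ← diagonal_one, diagonal_kronecker_diagonal,
      mulVec_diagonal, Fintype.sum_prod_type, Fin.sum_univ_two, ghz4]
    simp only [hhalf, ← Finset.mul_sum, hχ']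
    norm_num

end GHZ

section Circuit

variable {iABC_AB iABC_AC iABC_BC iABD_AB iABD_AD iABD_BD
    iACD_AC iACD_AD iACD_CD iBCD_BC iBCD_BD iBCD_CD : Type}
  {kAB_A kAB_B kAC_A kAC_C kAD_A kAD_D kBC_B kBC_C kBD_B kBD_D kCD_C kCD_D : Type}
  {εA εB εC εD : Type}

local notation "Ω" => (Fin 2 × εA) × (Fin 2 × εB) × (Fin 2 × εC) × (Fin 2 × εD)
local notation "K" => (kAB_A × kAB_B) × (kAC_A × kAC_C) × (kAD_A × kAD_D) × (kBC_B × kBC_C) ×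
  (kBD_B × kBD_D) × (kCD_C × kCD_D)
local notation "H" => (iABC_AB × iABC_AC × iABC_BC) × (iABD_AB × iABD_AD × iABD_BD) ×
  (iACD_AC × iACD_AD × iACD_CD) × (iBCD_BC × iBCD_BD × iBCD_CD)

set_option synthInstance.maxSize 1024

/-- Groups the outputs of the six transformations by the party that receives them. -/
def legs : K ≃ (kAB_A × kAC_A × kAD_A) × (kAB_B × kBC_B × kBD_B) × (kAC_C × kBC_C × kCD_C) ×
    (kAD_D × kBD_D × kCD_D) where
  toFun k := ((k.1.1, k.2.1.1, k.2.2.1.1), (k.1.2, k.2.2.2.1.1, k.2.2.2.2.1.1),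
    (k.2.1.2, k.2.2.2.1.2, k.2.2.2.2.2.1), (k.2.2.1.2, k.2.2.2.2.1.2, k.2.2.2.2.2.2))
  invFun l := ((l.1.1, l.2.1.1), (l.1.2.1, l.2.2.1.1), (l.1.2.2, l.2.2.2.1),
    (l.2.1.2.1, l.2.2.1.2.1), (l.2.1.2.2, l.2.2.2.2.1), (l.2.2.1.2.2, l.2.2.2.2.2))
  left_inv _ := rfl
  right_inv _ := rfl

/-- Groups the systems emitted by the four sources by the transformation that receives them. -/
def pairs : H ≃ (iABC_AB × iABD_AB) × (iABC_AC × iACD_AC) × (iABD_AD × iACD_AD) ×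
    (iABC_BC × iBCD_BC) × (iABD_BD × iBCD_BD) × (iACD_CD × iBCD_CD) where
  toFun x := ((x.1.1, x.2.1.1), (x.1.2.1, x.2.2.1.1), (x.2.1.2.1, x.2.2.1.2.1),
    (x.1.2.2, x.2.2.2.1), (x.2.1.2.2, x.2.2.2.2.1), (x.2.2.1.2.2, x.2.2.2.2.2))
  invFun y := ((y.1.1, y.2.1.1, y.2.2.2.1.1), (y.1.2, y.2.2.1.1, y.2.2.2.2.1.1),
    (y.2.1.2, y.2.2.1.2, y.2.2.2.2.2.1), (y.2.2.2.1.2, y.2.2.2.2.1.2, y.2.2.2.2.2.2))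
  left_inv _ := rfl
  right_inv _ := rfl

variable (ψABC : iABC_AB × iABC_AC × iABC_BC → ℂ) (ψABD : iABD_AB × iABD_AD × iABD_BD → ℂ)
  (ψACD : iACD_AC × iACD_AD × iACD_CD → ℂ) (ψBCD : iBCD_BC × iBCD_BD × iBCD_CD → ℂ)
  (UAB : Matrix (kAB_A × kAB_B) (iABC_AB × iABD_AB) ℂ)
  (UAC : Matrix (kAC_A × kAC_C) (iABC_AC × iACD_AC) ℂ)
  (UAD : Matrix (kAD_A × kAD_D) (iABD_AD × iACD_AD) ℂ)
  (UBC : Matrix (kBC_B × kBC_C) (iABC_BC × iBCD_BC) ℂ)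
  (UBD : Matrix (kBD_B × kBD_D) (iABD_BD × iBCD_BD) ℂ)
  (UCD : Matrix (kCD_C × kCD_D) (iACD_CD × iBCD_CD) ℂ)
  (VA : Matrix (Fin 2 × εA) (kAB_A × kAC_A × kAD_A) ℂ)
  (VB : Matrix (Fin 2 × εB) (kAB_B × kBC_B × kBD_B) ℂ)
  (VC : Matrix (Fin 2 × εC) (kAC_C × kBC_C × kCD_C) ℂ)
  (VD : Matrix (Fin 2 × εD) (kAD_D × kBD_D × kCD_D) ℂ)

def partyChannel : Matrix Ω K ℂ := (VA ⊗ₖ (VB ⊗ₖ (VC ⊗ₖ VD))).submatrix id legs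

def transformation : Matrix K H ℂ :=
  (UAB ⊗ₖ (UAC ⊗ₖ (UAD ⊗ₖ (UBC ⊗ₖ (UBD ⊗ₖ UCD))))).submatrix id pairs

local notation "𝒱" => partyChannel VA VB VC VD
local notation "𝒰" => transformation UAB UAC UAD UBC UBD UCD
local notation "Ψ" => productState ψABC ψABD ψACD ψBCD

variable [Fintype kAB_A] [Fintype kAB_B] [Fintype kAC_A] [Fintype kAC_C]
  [Fintype kAD_A] [Fintype kAD_D] [Fintype kBC_B] [Fintype kBC_C]
  [Fintype kBD_B] [Fintype kBD_D] [Fintype kCD_C] [Fintype kCD_D]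

def circuitMap : Matrix Ω H ℂ := 𝒱 * 𝒰

local notation "𝒲" => circuitMap UAB UAC UAD UBC UBD UCD VA VB VC VD

variable [Fintype iABC_AB] [Fintype iABC_AC] [Fintype iABC_BC]
  [Fintype iABD_AB] [Fintype iABD_AD] [Fintype iABD_BD]
  [Fintype iACD_AC] [Fintype iACD_AD] [Fintype iACD_CD]
  [Fintype iBCD_BC] [Fintype iBCD_BD] [Fintype iBCD_CD]

theorem circuitOutput_eq :
    circuitOutput ψABC ψABD ψACD ψBCD UAB UAC UAD UBC UBD UCD VA VB VC VD = 𝒲 *ᵥ Ψ := by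
  have hV : 𝒱 = fun w k =>
      VA w.1 (k.1.1, k.2.1.1, k.2.2.1.1) * VB w.2.1 (k.1.2, k.2.2.2.1.1, k.2.2.2.2.1.1) *
        VC w.2.2.1 (k.2.1.2, k.2.2.2.1.2, k.2.2.2.2.2.1) *
        VD w.2.2.2 (k.2.2.1.2, k.2.2.2.2.1.2, k.2.2.2.2.2.2) := by
    ext
    simp only [partyChannel, legs, Equiv.coe_fn_mk, submatrix_apply, id_eq, kroneckerMap_apply]
    ring
  have hU : 𝒰 = fun k x =>
      UAB k.1 (x.1.1, x.2.1.1) * UAC k.2.1 (x.1.2.1, x.2.2.1.1) *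
        UAD k.2.2.1 (x.2.1.2.1, x.2.2.1.2.1) * UBC k.2.2.2.1 (x.1.2.2, x.2.2.2.1) *
        UBD k.2.2.2.2.1 (x.2.1.2.2, x.2.2.2.2.1) * UCD k.2.2.2.2.2 (x.2.2.1.2.2, x.2.2.2.2.2) := by
    ext
    simp only [transformation, pairs, Equiv.coe_fn_mk, submatrix_apply, id_eq, kroneckerMap_apply]
    ring
  rw [circuitMap, ← mulVec_mulVec, hV, hU]
  rfl

variable [Fintype εA] [Fintype εB] [Fintype εC] [Fintype εD]
  [DecidableEq iABC_AB] [DecidableEq iABC_AC] [DecidableEq iABC_BC]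
  [DecidableEq iABD_AB] [DecidableEq iABD_AD] [DecidableEq iABD_BD]
  [DecidableEq iACD_AC] [DecidableEq iACD_AD] [DecidableEq iACD_CD]
  [DecidableEq iBCD_BC] [DecidableEq iBCD_BD] [DecidableEq iBCD_CD]
  [DecidableEq kAB_A] [DecidableEq kAB_B] [DecidableEq kAC_A] [DecidableEq kAC_C]
  [DecidableEq kAD_A] [DecidableEq kAD_D] [DecidableEq kBC_B] [DecidableEq kBC_C]
  [DecidableEq kBD_B] [DecidableEq kBD_D] [DecidableEq kCD_C] [DecidableEq kCD_D]

structure IsUnitaryCircuit : Prop where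
  unitary_AB : UABᴴ * UAB = 1 ∧ UAB * UABᴴ = 1
  unitary_AC : UACᴴ * UAC = 1 ∧ UAC * UACᴴ = 1
  unitary_AD : UADᴴ * UAD = 1 ∧ UAD * UADᴴ = 1
  unitary_BC : UBCᴴ * UBC = 1 ∧ UBC * UBCᴴ = 1
  unitary_BD : UBDᴴ * UBD = 1 ∧ UBD * UBDᴴ = 1
  unitary_CD : UCDᴴ * UCD = 1 ∧ UCD * UCDᴴ = 1
  isometry_A : VAᴴ * VA = 1
  isometry_B : VBᴴ * VB = 1
  isometry_C : VCᴴ * VC = 1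
  isometry_D : VDᴴ * VD = 1

variable {UAB UAC UAD UBC UBD UCD VA VB VC VD}

theorem transformation_conjTranspose_mul_self
    (hcirc : IsUnitaryCircuit UAB UAC UAD UBC UBD UCD VA VB VC VD) : 𝒰ᴴ * 𝒰 = 1 := by
  rw [transformation, conjTranspose_submatrix_id_mul_self,
    kronecker_conjTranspose_mul_self hcirc.unitary_AB.1 <| kronecker_conjTranspose_mul_self
      hcirc.unitary_AC.1 <| kronecker_conjTranspose_mul_self hcirc.unitary_AD.1 <|
      kronecker_conjTranspose_mul_self hcirc.unitary_BC.1 <|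
      kronecker_conjTranspose_mul_self hcirc.unitary_BD.1 hcirc.unitary_CD.1,
    submatrix_one_equiv]

theorem transformation_mul_conjTranspose_self
    (hcirc : IsUnitaryCircuit UAB UAC UAD UBC UBD UCD VA VB VC VD) : 𝒰 * 𝒰ᴴ = 1 := by
  rw [transformation, submatrix_id_mul_conjTranspose_self,
    kronecker_mul_conjTranspose_self hcirc.unitary_AB.2 <| kronecker_mul_conjTranspose_self
      hcirc.unitary_AC.2 <| kronecker_mul_conjTranspose_self hcirc.unitary_AD.2 <|
      kronecker_mul_conjTranspose_self hcirc.unitary_BC.2 <|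
      kronecker_mul_conjTranspose_self hcirc.unitary_BD.2 hcirc.unitary_CD.2]

theorem partyChannel_conjTranspose_mul_self
    (hcirc : IsUnitaryCircuit UAB UAC UAD UBC UBD UCD VA VB VC VD) : 𝒱ᴴ * 𝒱 = 1 := by
  rw [partyChannel, conjTranspose_submatrix_id_mul_self,
    kronecker_conjTranspose_mul_self hcirc.isometry_A <| kronecker_conjTranspose_mul_self
      hcirc.isometry_B <| kronecker_conjTranspose_mul_self hcirc.isometry_C hcirc.isometry_D,
    submatrix_one_equiv]

theorem circuitMap_conjTranspose_mul_self
    (hcirc : IsUnitaryCircuit UAB UAC UAD UBC UBD UCD VA VB VC VD) : 𝒲ᴴ * 𝒲 = 1 := by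
  rw [circuitMap, conjTranspose_mul, Matrix.mul_assoc, ← Matrix.mul_assoc 𝒱ᴴ,
    partyChannel_conjTranspose_mul_self hcirc, Matrix.one_mul,
    transformation_conjTranspose_mul_self hcirc]

/- `𝒲ᴴ (D ⊗ 1) 𝒲` acts on the legs of `A`, hence on all legs of `AB, AC, AD`, and after
conjugation by `𝒰` on all systems of the sources `ABC, ABD, ACD`: it is the identity on the system
of `BCD`. -/
theorem hasTensorFactor_pullback_A [DecidableEq εB] [DecidableEq εC] [DecidableEq εD]
    (hcirc : IsUnitaryCircuit UAB UAC UAD UBC UBD UCD VA VB VC VD)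
    (D : Matrix (Fin 2 × εA) (Fin 2 × εA) ℂ) :
    HasTensorFactor (pick₄.trans (Equiv.prodComm _ _)) ψBCD
      ((𝒲ᴴ * (D ⊗ₖ 1 : Matrix Ω Ω ℂ) * 𝒲) *ᵥ Ψ) := by
  have hD : IsLocal pick₁ (D ⊗ₖ 1 : Matrix Ω Ω ℂ) := ⟨D, rfl⟩
  have hV : 𝒱 = (VA ⊗ₖ (VB ⊗ₖ (VC ⊗ₖ VD))).submatrix pick₁ (pick₁ ∘ legs) := rfl
  have hU : 𝒰 = ((UAB ⊗ₖ (UAC ⊗ₖ UAD)) ⊗ₖ (UBC ⊗ₖ (UBD ⊗ₖ UCD))).submatrix splitAtA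
      (splitAtA ∘ pairs) := by
    rw [transformation, kronecker_eq_splitAtA, submatrix_submatrix]; rfl
  have hVR := kronecker_conjTranspose_mul_self hcirc.isometry_B
    (kronecker_conjTranspose_mul_self hcirc.isometry_C hcirc.isometry_D)
  have hUR := kronecker_conjTranspose_mul_self hcirc.unitary_BC.1
    (kronecker_conjTranspose_mul_self hcirc.unitary_BD.1 hcirc.unitary_CD.1)
  rw [circuitMap, conjTranspose_mul_mul_conj]
  refine IsLocal.hasTensorFactor_mulVec ?_ productState_hasTensorFactor₄
  refine (((hD.conj hV hVR).coarsen (σ' := splitAtA) (fun a => (a.1.1, a.2.1.1, a.2.2.1))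
    (fun a => (a.1.2, a.2.1.2, a.2.2.2)) (fun _ => rfl) ?_).conj hU hUR).coarsen
    (fun t => ((t.1.1, t.2.1.1), (t.1.2.1, t.2.2.1), (t.2.1.2.1, t.2.2.2.1)))
    (fun t => (t.1.2.2, t.2.1.2.2, t.2.2.2.2)) (fun _ => rfl) ?_
  · intro k k'
    simp only [pick₁, Equiv.refl_apply, Function.comp_apply, legs, splitAtA, Equiv.coe_fn_mk,
      Prod.ext_iff]
    tauto
  · intro x x'
    simp only [pick₄, pairs, splitAtA, Equiv.coe_fn_mk, Function.comp_apply, Equiv.trans_apply,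
      Equiv.prodComm_apply, Prod.swap_prod_mk, Prod.ext_iff]
    tauto

theorem hasTensorFactor_pullback_B [DecidableEq εA] [DecidableEq εC] [DecidableEq εD]
    (hcirc : IsUnitaryCircuit UAB UAC UAD UBC UBD UCD VA VB VC VD)
    (D : Matrix (Fin 2 × εB) (Fin 2 × εB) ℂ) :
    HasTensorFactor (pick₃.trans (Equiv.prodComm _ _)) ψACD
      ((𝒲ᴴ * (1 ⊗ₖ (D ⊗ₖ (1 ⊗ₖ 1)) : Matrix Ω Ω ℂ) * 𝒲) *ᵥ Ψ) := by
  have hD : IsLocal pick₂ (1 ⊗ₖ (D ⊗ₖ (1 ⊗ₖ 1)) : Matrix Ω Ω ℂ) :=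
    ⟨D, by rw [kronecker_eq_pick₂, one_kronecker_one, one_kronecker_one]⟩
  have hV : 𝒱 = (VB ⊗ₖ (VA ⊗ₖ (VC ⊗ₖ VD))).submatrix pick₂ (pick₂ ∘ legs) := by
    rw [partyChannel, kronecker_eq_pick₂, submatrix_submatrix]; rfl
  have hU : 𝒰 = ((UAB ⊗ₖ (UBC ⊗ₖ UBD)) ⊗ₖ (UAC ⊗ₖ (UAD ⊗ₖ UCD))).submatrix splitAtB
      (splitAtB ∘ pairs) := by
    rw [transformation, kronecker_eq_splitAtB, submatrix_submatrix]; rfl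
  have hVR := kronecker_conjTranspose_mul_self hcirc.isometry_A
    (kronecker_conjTranspose_mul_self hcirc.isometry_C hcirc.isometry_D)
  have hUR := kronecker_conjTranspose_mul_self hcirc.unitary_AC.1
    (kronecker_conjTranspose_mul_self hcirc.unitary_AD.1 hcirc.unitary_CD.1)
  rw [circuitMap, conjTranspose_mul_mul_conj]
  refine IsLocal.hasTensorFactor_mulVec ?_ productState_hasTensorFactor₃
  refine (((hD.conj hV hVR).coarsen (σ' := splitAtB) (fun a => (a.1.2, a.2.1.1, a.2.2.1))
    (fun a => (a.1.1, a.2.1.2, a.2.2.2)) (fun _ => rfl) ?_).conj hU hUR).coarsen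
    (fun t => ((t.1.1, t.2.1.1), (t.1.2.2, t.2.2.1), (t.2.1.2.2, t.2.2.2.1)))
    (fun t => (t.1.2.1, t.2.1.2.1, t.2.2.2.2)) (fun _ => rfl) ?_
  · intro k k'
    simp only [pick₂, legs, splitAtB, Equiv.coe_fn_mk, Function.comp_apply, Prod.ext_iff]
    tauto
  · intro x x'
    simp only [pick₃, pairs, splitAtB, Equiv.coe_fn_mk, Function.comp_apply, Equiv.trans_apply,
      Equiv.prodComm_apply, Prod.swap_prod_mk, Prod.ext_iff]
    tauto

theorem hasTensorFactor_pullback_C [DecidableEq εA] [DecidableEq εB] [DecidableEq εD]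
    (hcirc : IsUnitaryCircuit UAB UAC UAD UBC UBD UCD VA VB VC VD)
    (D : Matrix (Fin 2 × εC) (Fin 2 × εC) ℂ) :
    HasTensorFactor (pick₂.trans (Equiv.prodComm _ _)) ψABD
      ((𝒲ᴴ * (1 ⊗ₖ (1 ⊗ₖ (D ⊗ₖ 1)) : Matrix Ω Ω ℂ) * 𝒲) *ᵥ Ψ) := by
  have hD : IsLocal pick₃ (1 ⊗ₖ (1 ⊗ₖ (D ⊗ₖ 1)) : Matrix Ω Ω ℂ) :=
    ⟨D, by rw [kronecker_eq_pick₃, one_kronecker_one, one_kronecker_one]⟩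
  have hV : 𝒱 = (VC ⊗ₖ (VA ⊗ₖ (VB ⊗ₖ VD))).submatrix pick₃ (pick₃ ∘ legs) := by
    rw [partyChannel, kronecker_eq_pick₃, submatrix_submatrix]; rfl
  have hU : 𝒰 = ((UAC ⊗ₖ (UBC ⊗ₖ UCD)) ⊗ₖ (UAB ⊗ₖ (UAD ⊗ₖ UBD))).submatrix splitAtC
      (splitAtC ∘ pairs) := by
    rw [transformation, kronecker_eq_splitAtC, submatrix_submatrix]; rfl
  have hVR := kronecker_conjTranspose_mul_self hcirc.isometry_A
    (kronecker_conjTranspose_mul_self hcirc.isometry_B hcirc.isometry_D)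
  have hUR := kronecker_conjTranspose_mul_self hcirc.unitary_AB.1
    (kronecker_conjTranspose_mul_self hcirc.unitary_AD.1 hcirc.unitary_BD.1)
  rw [circuitMap, conjTranspose_mul_mul_conj]
  refine IsLocal.hasTensorFactor_mulVec ?_ productState_hasTensorFactor₂
  refine (((hD.conj hV hVR).coarsen (σ' := splitAtC) (fun a => (a.1.2, a.2.1.2, a.2.2.1))
    (fun a => (a.1.1, a.2.1.1, a.2.2.2)) (fun _ => rfl) ?_).conj hU hUR).coarsen
    (fun t => ((t.1.2.1, t.2.1.1), (t.1.2.2, t.2.2.1), (t.2.1.2.2, t.2.2.2.2)))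
    (fun t => (t.1.1, t.2.1.2.1, t.2.2.2.1)) (fun _ => rfl) ?_
  · intro k k'
    simp only [pick₃, legs, splitAtC, Equiv.coe_fn_mk, Function.comp_apply, Prod.ext_iff]
    tauto
  · intro x x'
    simp only [pick₂, pairs, splitAtC, Equiv.coe_fn_mk, Function.comp_apply, Equiv.trans_apply,
      Equiv.prodComm_apply, Prod.swap_prod_mk, Prod.ext_iff]
    tauto

theorem hasTensorFactor_pullback_D [DecidableEq εA] [DecidableEq εB] [DecidableEq εC]
    (hcirc : IsUnitaryCircuit UAB UAC UAD UBC UBD UCD VA VB VC VD)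
    (D : Matrix (Fin 2 × εD) (Fin 2 × εD) ℂ) :
    HasTensorFactor (pick₁.trans (Equiv.prodComm _ _)) ψABC
      ((𝒲ᴴ * (1 ⊗ₖ (1 ⊗ₖ (1 ⊗ₖ D)) : Matrix Ω Ω ℂ) * 𝒲) *ᵥ Ψ) := by
  have hD : IsLocal pick₄ (1 ⊗ₖ (1 ⊗ₖ (1 ⊗ₖ D)) : Matrix Ω Ω ℂ) :=
    ⟨D, by rw [kronecker_eq_pick₄, one_kronecker_one, one_kronecker_one]⟩
  have hV : 𝒱 = (VD ⊗ₖ (VA ⊗ₖ (VB ⊗ₖ VC))).submatrix pick₄ (pick₄ ∘ legs) := by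
    rw [partyChannel, kronecker_eq_pick₄, submatrix_submatrix]; rfl
  have hU : 𝒰 = ((UAD ⊗ₖ (UBD ⊗ₖ UCD)) ⊗ₖ (UAB ⊗ₖ (UAC ⊗ₖ UBC))).submatrix splitAtD
      (splitAtD ∘ pairs) := by
    rw [transformation, kronecker_eq_splitAtD, submatrix_submatrix]; rfl
  have hVR := kronecker_conjTranspose_mul_self hcirc.isometry_A
    (kronecker_conjTranspose_mul_self hcirc.isometry_B hcirc.isometry_C)
  have hUR := kronecker_conjTranspose_mul_self hcirc.unitary_AB.1
    (kronecker_conjTranspose_mul_self hcirc.unitary_AC.1 hcirc.unitary_BC.1)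
  rw [circuitMap, conjTranspose_mul_mul_conj]
  refine IsLocal.hasTensorFactor_mulVec ?_ productState_hasTensorFactor₁
  refine (((hD.conj hV hVR).coarsen (σ' := splitAtD) (fun a => (a.1.2, a.2.1.2, a.2.2.2))
    (fun a => (a.1.1, a.2.1.1, a.2.2.1)) (fun _ => rfl) ?_).conj hU hUR).coarsen
    (fun t => ((t.1.2.1, t.2.1.2.1), (t.1.2.2, t.2.2.2.1), (t.2.1.2.2, t.2.2.2.2)))
    (fun t => (t.1.1, t.2.1.1, t.2.2.1)) (fun _ => rfl) ?_
  · intro k k'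
    simp only [pick₄, legs, splitAtD, Equiv.coe_fn_mk, Function.comp_apply, Prod.ext_iff]
    tauto
  · intro x x'
    simp only [pick₁, Equiv.refl_apply, pairs, splitAtD, Equiv.coe_fn_mk, Function.comp_apply,
      Equiv.trans_apply, Equiv.prodComm_apply, Prod.ext_iff]
    tauto

theorem pullback_eq_smul [DecidableEq εA] [DecidableEq εB] [DecidableEq εC] [DecidableEq εD]
    (hcirc : IsUnitaryCircuit UAB UAC UAD UBC UBD UCD VA VB VC VD) {u : H → ℂ}
    (DA : Matrix (Fin 2 × εA) (Fin 2 × εA) ℂ) (DB : Matrix (Fin 2 × εB) (Fin 2 × εB) ℂ)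
    (DC : Matrix (Fin 2 × εC) (Fin 2 × εC) ℂ) (DD : Matrix (Fin 2 × εD) (Fin 2 × εD) ℂ)
    (hA : (𝒲ᴴ * (DA ⊗ₖ 1 : Matrix Ω Ω ℂ) * 𝒲) *ᵥ Ψ = u)
    (hB : (𝒲ᴴ * (1 ⊗ₖ (DB ⊗ₖ (1 ⊗ₖ 1)) : Matrix Ω Ω ℂ) * 𝒲) *ᵥ Ψ = u)
    (hC : (𝒲ᴴ * (1 ⊗ₖ (1 ⊗ₖ (DC ⊗ₖ 1)) : Matrix Ω Ω ℂ) * 𝒲) *ᵥ Ψ = u)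
    (hD : (𝒲ᴴ * (1 ⊗ₖ (1 ⊗ₖ (1 ⊗ₖ DD)) : Matrix Ω Ω ℂ) * 𝒲) *ᵥ Ψ = u)
    {p : H} (hp : Ψ p ≠ 0) : u = (u p / Ψ p) • Ψ :=
  eq_smul_productState (hD ▸ hasTensorFactor_pullback_D ψABC ψABD ψACD ψBCD hcirc DD)
    (hC ▸ hasTensorFactor_pullback_C ψABC ψABD ψACD ψBCD hcirc DC)
    (hB ▸ hasTensorFactor_pullback_B ψABC ψABD ψACD ψBCD hcirc DB)
    (hA ▸ hasTensorFactor_pullback_A ψABC ψABD ψACD ψBCD hcirc DA) hp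

theorem pullback_mul_pullback [DecidableEq εA] [DecidableEq εB] [DecidableEq εC] [DecidableEq εD]
    (hcirc : IsUnitaryCircuit UAB UAC UAD UBC UBD UCD VA VB VC VD)
    (DA : Matrix (Fin 2 × εA) (Fin 2 × εA) ℂ)
    (E : Matrix ((Fin 2 × εB) × (Fin 2 × εC) × (Fin 2 × εD))
      ((Fin 2 × εB) × (Fin 2 × εC) × (Fin 2 × εD)) ℂ) :
    𝒲ᴴ * (DA ⊗ₖ 1 : Matrix Ω Ω ℂ) * 𝒲 * (𝒲ᴴ * (1 ⊗ₖ E : Matrix Ω Ω ℂ) * 𝒲) =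
      𝒲ᴴ * (DA ⊗ₖ E : Matrix Ω Ω ℂ) * 𝒲 := by
  simp only [circuitMap, conjTranspose_mul_mul_conj]
  rw [conj_mul_conj (transformation_mul_conjTranspose_self hcirc), partyChannel,
    conj_kronecker_one_mul_conj_one_kronecker hcirc.isometry_A (kronecker_conjTranspose_mul_self
      hcirc.isometry_B (kronecker_conjTranspose_mul_self hcirc.isometry_C hcirc.isometry_D))]

theorem exists_pullback_zeroProjA_eq_smul [DecidableEq εA] [DecidableEq εB] [DecidableEq εC]
    [DecidableEq εD] (hcirc : IsUnitaryCircuit UAB UAC UAD UBC UBD UCD VA VB VC VD)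
    {χ : εA × εB × εC × εD → ℂ} (hf : 𝒲 *ᵥ Ψ = ghzOutput χ) {p : H} (hp : Ψ p ≠ 0) :
    ∃ μ : ℂ, 𝒲ᴴ *ᵥ (zeroProjA *ᵥ ghzOutput χ) = μ • Ψ := by
  have hpull : ∀ P, (𝒲ᴴ * P * 𝒲) *ᵥ Ψ = 𝒲ᴴ *ᵥ (P *ᵥ ghzOutput χ) := fun P => by
    rw [← mulVec_mulVec, ← mulVec_mulVec, hf]
  obtain ⟨hB, hC, hD, -⟩ := ghzOutput_correlated χ
  exact ⟨_, pullback_eq_smul ψABC ψABD ψACD ψBCD hcirc (zeroProj εA) (zeroProj εB) (zeroProj εC)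
    (zeroProj εD) (hpull _) ((hpull _).trans (congrArg _ hB)) ((hpull _).trans (congrArg _ hC))
    ((hpull _).trans (congrArg _ hD)) hp⟩

end Circuit

end CommonCause

open CommonCause

set_option synthInstance.maxSize 1024

section

variable {iABC_AB iABC_AC iABC_BC iABD_AB iABD_AD iABD_BD
    iACD_AC iACD_AD iACD_CD iBCD_BC iBCD_BD iBCD_CD : Type}
variable [Fintype iABC_AB] [Fintype iABC_AC] [Fintype iABC_BC]
  [Fintype iABD_AB] [Fintype iABD_AD] [Fintype iABD_BD]
  [Fintype iACD_AC] [Fintype iACD_AD] [Fintype iACD_CD]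
  [Fintype iBCD_BC] [Fintype iBCD_BD] [Fintype iBCD_CD]
variable [DecidableEq iABC_AB] [DecidableEq iABC_AC] [DecidableEq iABC_BC]
  [DecidableEq iABD_AB] [DecidableEq iABD_AD] [DecidableEq iABD_BD]
  [DecidableEq iACD_AC] [DecidableEq iACD_AD] [DecidableEq iACD_CD]
  [DecidableEq iBCD_BC] [DecidableEq iBCD_BD] [DecidableEq iBCD_CD]
variable {kAB_A kAB_B kAC_A kAC_C kAD_A kAD_D kBC_B kBC_C kBD_B kBD_D kCD_C kCD_D : Type}
variable [Fintype kAB_A] [Fintype kAB_B] [Fintype kAC_A] [Fintype kAC_C]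
  [Fintype kAD_A] [Fintype kAD_D] [Fintype kBC_B] [Fintype kBC_C]
  [Fintype kBD_B] [Fintype kBD_D] [Fintype kCD_C] [Fintype kCD_D]
variable [DecidableEq kAB_A] [DecidableEq kAB_B] [DecidableEq kAC_A] [DecidableEq kAC_C]
  [DecidableEq kAD_A] [DecidableEq kAD_D] [DecidableEq kBC_B] [DecidableEq kBC_C]
  [DecidableEq kBD_B] [DecidableEq kBD_D] [DecidableEq kCD_C] [DecidableEq kCD_D]
variable {εA εB εC εD : Type}
variable [Fintype εA] [Fintype εB] [Fintype εC] [Fintype εD]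

theorem no_ghz_without_common_cause_general
    (ψABC : iABC_AB × iABC_AC × iABC_BC → ℂ)
    (ψABD : iABD_AB × iABD_AD × iABD_BD → ℂ)
    (ψACD : iACD_AC × iACD_AD × iACD_CD → ℂ)
    (ψBCD : iBCD_BC × iBCD_BD × iBCD_CD → ℂ)
    (UAB : Matrix (kAB_A × kAB_B) (iABC_AB × iABD_AB) ℂ)
    (UAC : Matrix (kAC_A × kAC_C) (iABC_AC × iACD_AC) ℂ)
    (UAD : Matrix (kAD_A × kAD_D) (iABD_AD × iACD_AD) ℂ)
    (UBC : Matrix (kBC_B × kBC_C) (iABC_BC × iBCD_BC) ℂ)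
    (UBD : Matrix (kBD_B × kBD_D) (iABD_BD × iBCD_BD) ℂ)
    (UCD : Matrix (kCD_C × kCD_D) (iACD_CD × iBCD_CD) ℂ)
    (hUAB : UABᴴ * UAB = 1 ∧ UAB * UABᴴ = 1) (hUAC : UACᴴ * UAC = 1 ∧ UAC * UACᴴ = 1)
    (hUAD : UADᴴ * UAD = 1 ∧ UAD * UADᴴ = 1) (hUBC : UBCᴴ * UBC = 1 ∧ UBC * UBCᴴ = 1)
    (hUBD : UBDᴴ * UBD = 1 ∧ UBD * UBDᴴ = 1) (hUCD : UCDᴴ * UCD = 1 ∧ UCD * UCDᴴ = 1)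
    (VA : Matrix (Fin 2 × εA) (kAB_A × kAC_A × kAD_A) ℂ)
    (VB : Matrix (Fin 2 × εB) (kAB_B × kBC_B × kBD_B) ℂ)
    (VC : Matrix (Fin 2 × εC) (kAC_C × kBC_C × kCD_C) ℂ)
    (VD : Matrix (Fin 2 × εD) (kAD_D × kBD_D × kCD_D) ℂ)
    (hVA : VAᴴ * VA = 1) (hVB : VBᴴ * VB = 1) (hVC : VCᴴ * VC = 1) (hVD : VDᴴ * VD = 1) :
    ¬ ∃ χ : εA × εB × εC × εD → ℂ, (∑ e, ‖χ e‖ ^ 2 = 1) ∧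
        ∀ (q1 q2 q3 q4 : Fin 2) (e1 : εA) (e2 : εB) (e3 : εC) (e4 : εD),
          circuitOutput ψABC ψABD ψACD ψBCD UAB UAC UAD UBC UBD UCD VA VB VC VD
              ((q1, e1), (q2, e2), (q3, e3), (q4, e4)) =
            ghz4 q1 q2 q3 q4 * χ (e1, e2, e3, e4) := by
  classical
  rintro ⟨χ, hχ, h⟩
  have hcirc : IsUnitaryCircuit UAB UAC UAD UBC UBD UCD VA VB VC VD :=
    ⟨hUAB, hUAC, hUAD, hUBC, hUBD, hUCD, hVA, hVB, hVC, hVD⟩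
  set W := circuitMap UAB UAC UAD UBC UBD UCD VA VB VC VD
  set Ψ := productState ψABC ψABD ψACD ψBCD
  have hf : W *ᵥ Ψ = ghzOutput χ := by
    rw [← circuitOutput_eq]; funext w; exact h _ _ _ _ _ _ _ _
  obtain ⟨-, -, hfD, hfAD⟩ := ghzOutput_correlated χ
  obtain ⟨hff, hfA⟩ := ghzOutput_dotProduct χ hχ
  have hΨ : star Ψ ⬝ᵥ Ψ = 1 := by
    rw [← star_mulVec_dotProduct_mulVec (circuitMap_conjTranspose_mul_self hcirc), hf, hff]
  obtain ⟨p, hp⟩ : ∃ p, Ψ p ≠ 0 := by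
    by_contra! h0
    simp [show Ψ = 0 from funext h0] at hΨ
  obtain ⟨μ, hu⟩ := exists_pullback_zeroProjA_eq_smul ψABC ψABD ψACD ψBCD hcirc hf hp
  have hμ : μ = 2⁻¹ := by
    rw [← hfA, ← hf, star_mulVec, ← dotProduct_mulVec, hf, hu, dotProduct_smul, hΨ, smul_eq_mul,
      mul_one]
  have hμμ : μ * μ = μ := mul_self_eq_of_pullback_mul hΨ
    (pullback_mul_pullback hcirc (zeroProj εA) (1 ⊗ₖ (1 ⊗ₖ zeroProj εD)))
    (by rw [hf]; exact hfD) (by rw [hf]; exact hfAD) (by rw [hf]; exact hu)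
  rw [hμ] at hμμ
  norm_num at hμμ

/-- **A GHZ₄ state cannot be produced in the canonical four-party circuit**: if the four
source states are unit vectors, the six transformation matrices are unitary, and the four
party channels are isometries `V_X : ⊗_{T∋X} K_{T,X} → ℂ² ⊗ E_X`, then there is no unit
vector `χ ∈ E_A ⊗ E_B ⊗ E_C ⊗ E_D` with
`(V_A ⊗ V_B ⊗ V_C ⊗ V_D) U |ψ⟩ = |GHZ₄⟩ ⊗ |χ⟩` (up to the canonical reordering of
tensor factors). -/
theorem no_ghz_without_common_cause
    (ψABC : iABC_AB × iABC_AC × iABC_BC → ℂ)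
    (ψABD : iABD_AB × iABD_AD × iABD_BD → ℂ)
    (ψACD : iACD_AC × iACD_AD × iACD_CD → ℂ)
    (ψBCD : iBCD_BC × iBCD_BD × iBCD_CD → ℂ)
    (hψABC : ∑ x, ‖ψABC x‖ ^ 2 = 1) (hψABD : ∑ x, ‖ψABD x‖ ^ 2 = 1)
    (hψACD : ∑ x, ‖ψACD x‖ ^ 2 = 1) (hψBCD : ∑ x, ‖ψBCD x‖ ^ 2 = 1)
    (UAB : Matrix (kAB_A × kAB_B) (iABC_AB × iABD_AB) ℂ)
    (UAC : Matrix (kAC_A × kAC_C) (iABC_AC × iACD_AC) ℂ)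
    (UAD : Matrix (kAD_A × kAD_D) (iABD_AD × iACD_AD) ℂ)
    (UBC : Matrix (kBC_B × kBC_C) (iABC_BC × iBCD_BC) ℂ)
    (UBD : Matrix (kBD_B × kBD_D) (iABD_BD × iBCD_BD) ℂ)
    (UCD : Matrix (kCD_C × kCD_D) (iACD_CD × iBCD_CD) ℂ)
    (hUAB : UABᴴ * UAB = 1 ∧ UAB * UABᴴ = 1) (hUAC : UACᴴ * UAC = 1 ∧ UAC * UACᴴ = 1)
    (hUAD : UADᴴ * UAD = 1 ∧ UAD * UADᴴ = 1) (hUBC : UBCᴴ * UBC = 1 ∧ UBC * UBCᴴ = 1)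
    (hUBD : UBDᴴ * UBD = 1 ∧ UBD * UBDᴴ = 1) (hUCD : UCDᴴ * UCD = 1 ∧ UCD * UCDᴴ = 1)
    (VA : Matrix (Fin 2 × εA) (kAB_A × kAC_A × kAD_A) ℂ)
    (VB : Matrix (Fin 2 × εB) (kAB_B × kBC_B × kBD_B) ℂ)
    (VC : Matrix (Fin 2 × εC) (kAC_C × kBC_C × kCD_C) ℂ)
    (VD : Matrix (Fin 2 × εD) (kAD_D × kBD_D × kCD_D) ℂ)
    (hVA : VAᴴ * VA = 1) (hVB : VBᴴ * VB = 1) (hVC : VCᴴ * VC = 1) (hVD : VDᴴ * VD = 1) :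
    ¬ ∃ χ : εA × εB × εC × εD → ℂ, (∑ e, ‖χ e‖ ^ 2 = 1) ∧
        ∀ (q1 q2 q3 q4 : Fin 2) (e1 : εA) (e2 : εB) (e3 : εC) (e4 : εD),
          circuitOutput ψABC ψABD ψACD ψBCD UAB UAC UAD UBC UBD UCD VA VB VC VD
              ((q1, e1), (q2, e2), (q3, e3), (q4, e4)) =
            ghz4 q1 q2 q3 q4 * χ (e1, e2, e3, e4) :=
  no_ghz_without_common_cause_general ψABC ψABD ψACD ψBCD UAB UAC UAD UBC UBD UCD hUAB hUAC hUAD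
    hUBC hUBD hUCD VA VB VC VD hVA hVB hVC hVD

end
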